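/- Define T on C¹([0, 6/7]) by (Tf)(t) = cos²(πt/4)·f(t/8) + sin²(πt/4)·f(t/8 + 3/4). Then T maps C¹([0,6/7]) to itself (since t/8 and t/8 + 3/4 lie in [0,6/7] for t ∈ [0,6/7]), fixes the value at 0 (Tf(0) = f(0)), and satisfies the contraction estimate max|(Tf)'| ≤ (3π/16 + 1/8)·max|f'|, where 3π/16 + 1/8 < 1. -/

import Mathlib

/-!
Differentiating, `(Tf)'(t)` is `(π/4) sin(πt/2) (f(t/8 + 3/4) - f(t/8))` plus the convex
combination, with weights `cos²(πt/4)` and `sin²(πt/4)`, of `f'(t/8)/8` and `f'(t/8 + 3/4)/8`.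
The mean value theorem bounds the difference by `(3/4) max|f'|` and the convex combination is at
most `max|f'|/8`, which gives the factor `3π/16 + 1/8`.
-/

open Real Set

theorem three_mul_pi_div_sixteen_add_lt_one : 3 * π / 16 + 1 / 8 < 1 := by
  linarith [pi_lt_d2]

section SquaredTrigBlend

variable {u F G : ℝ → ℝ} {s : Set ℝ} {t u' F' G' : ℝ}

theorem hasDerivWithinAt_cos_sq_mul_add_sin_sq_mul (hu : HasDerivAt u u' t)
    (hF : HasDerivWithinAt F F' s t) (hG : HasDerivWithinAt G G' s t) :
    HasDerivWithinAt (fun x => Real.cos (u x) ^ 2 * F x + Real.sin (u x) ^ 2 * G x)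
      (u' * Real.sin (2 * u t) * (G t - F t)
        + (Real.cos (u t) ^ 2 * F' + Real.sin (u t) ^ 2 * G')) s t := by
  have hcos := (hu.cos.fun_pow 2).hasDerivWithinAt (s := s)
  have hsin := (hu.sin.fun_pow 2).hasDerivWithinAt (s := s)
  refine ((hcos.mul hF).add (hsin.mul hG)).congr_deriv ?_
  rw [Real.sin_two_mul]
  ring

theorem abs_cos_sq_mul_add_sin_sq_mul_le (θ : ℝ) {x y M : ℝ} (hx : |x| ≤ M)
    (hy : |y| ≤ M) :
    |cos θ ^ 2 * x + sin θ ^ 2 * y| ≤ M :=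
  calc |cos θ ^ 2 * x + sin θ ^ 2 * y| ≤ cos θ ^ 2 * |x| + sin θ ^ 2 * |y| := by
        refine (abs_add_le _ _).trans ?_
        rw [abs_mul, abs_mul, abs_of_nonneg (sq_nonneg (cos θ)),
          abs_of_nonneg (sq_nonneg (sin θ))]
    _ ≤ cos θ ^ 2 * M + sin θ ^ 2 * M := by gcongr
    _ = M := by rw [← add_mul, cos_sq_add_sin_sq, one_mul]

theorem abs_mul_sin_mul_add_le (a θ θ' : ℝ) {d x y D M : ℝ} (hd : |d| ≤ D)
    (hx : |x| ≤ M) (hy : |y| ≤ M) :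
    |a * sin θ * d + (cos θ' ^ 2 * x + sin θ' ^ 2 * y)| ≤ |a| * D + M := by
  have hsin : |a * sin θ * d| ≤ |a| * D := by
    rw [abs_mul, abs_mul]
    calc |a| * |sin θ| * |d| ≤ |a| * 1 * D := by
          gcongr
          exact abs_sin_le_one θ
      _ = |a| * D := by ring
  exact (abs_add_le _ _).trans (add_le_add hsin (abs_cos_sq_mul_add_sin_sq_mul_le θ' hx hy))

end SquaredTrigBlend

theorem stmt12 (f f' : ℝ → ℝ) (C : ℝ)
    (hf : ∀ t ∈ Set.Icc (0:ℝ) (6/7), HasDerivWithinAt f (f' t) (Set.Icc (0:ℝ) (6/7)) t)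
    (hC : ∀ t ∈ Set.Icc (0:ℝ) (6/7), |f' t| ≤ C) :
    (∀ t ∈ Set.Icc (0:ℝ) (6/7),
        t / 8 ∈ Set.Icc (0:ℝ) (6/7) ∧ t / 8 + 3/4 ∈ Set.Icc (0:ℝ) (6/7)) ∧
    ((fun s => Real.cos (π * s / 4) ^ 2 * f (s / 8)
        + Real.sin (π * s / 4) ^ 2 * f (s / 8 + 3/4)) 0 = f 0) ∧
    (3 * π / 16 + 1/8 < 1) ∧
    (∃ g : ℝ → ℝ, ∀ t ∈ Set.Icc (0:ℝ) (6/7),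
      HasDerivWithinAt
        (fun s => Real.cos (π * s / 4) ^ 2 * f (s / 8)
          + Real.sin (π * s / 4) ^ 2 * f (s / 8 + 3/4))
        (g t) (Set.Icc (0:ℝ) (6/7)) t ∧
      |g t| ≤ (3 * π / 16 + 1/8) * C) := by
  set J := Icc (0 : ℝ) (6 / 7)
  have hτ₀ : MapsTo (fun t : ℝ => t / 8) J J :=
    fun t ht => ⟨by linarith [ht.1], by linarith [ht.2]⟩
  have hτ₃ : MapsTo (fun t : ℝ => t / 8 + 3 / 4) J J :=
    fun t ht => ⟨by linarith [ht.1], by linarith [ht.2]⟩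
  have hf' : ∀ x ∈ J, |f' x * (1 / 8)| ≤ C / 8 := fun x hx => by
    rw [abs_mul, abs_of_pos (by norm_num : (0 : ℝ) < 1 / 8)]
    linarith [hC x hx]
  refine ⟨fun t ht => ⟨hτ₀ ht, hτ₃ ht⟩, by simp, three_mul_pi_div_sixteen_add_lt_one,
    fun t => π / 4 * sin (2 * (π * t / 4)) * (f (t / 8 + 3 / 4) - f (t / 8))
      + (cos (π * t / 4) ^ 2 * (f' (t / 8) * (1 / 8))
        + sin (π * t / 4) ^ 2 * (f' (t / 8 + 3 / 4) * (1 / 8))), fun t ht => ⟨?_, ?_⟩⟩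
  · have hdiv : HasDerivWithinAt (fun x : ℝ => x / 8) (1 / 8) J t :=
      (hasDerivWithinAt_id t J).div_const 8
    have hu : HasDerivAt (fun x : ℝ => π * x / 4) (π / 4) t := by
      simpa using ((hasDerivAt_id t).const_mul π).div_const 4
    exact hasDerivWithinAt_cos_sq_mul_add_sin_sq_mul hu ((hf _ (hτ₀ ht)).comp t hdiv hτ₀)
      ((hf _ (hτ₃ ht)).comp t (hdiv.add_const (3 / 4)) hτ₃)
  · have hmvt : |f (t / 8 + 3 / 4) - f (t / 8)| ≤ C * (3 / 4) := by
      have := (convex_Icc (0 : ℝ) (6 / 7)).norm_image_sub_le_of_norm_hasDerivWithin_le hf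
        (fun x hx => (Real.norm_eq_abs _).trans_le (hC x hx)) (hτ₀ ht) (hτ₃ ht)
      simpa [Real.norm_eq_abs] using this
    calc _ ≤ |π / 4| * (C * (3 / 4)) + C / 8 :=
          abs_mul_sin_mul_add_le _ _ _ hmvt (hf' _ (hτ₀ ht)) (hf' _ (hτ₃ ht))
      _ = (3 * π / 16 + 1 / 8) * C := by
          rw [abs_of_pos (by positivity)]
          ring
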